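/- For every δ > 0 and every η ∈ ℝ with η ≠ 0, the local double layer heat potential across the flat boundary {x₂ = 0} with unit density and outward normal (0,-1) satisfies the exact identity ∫_0^δ ∫_ℝ (-η/(2t)) · exp(-(ξ² + η²)/(4t))/(4πt) dξ dt = -(1/2)·sgn(η)·erfc(|η|/(2√δ)), where erfc(x) = (2/√π) ∫_x^∞ exp(-u²) du. -/

import Mathlib

open MeasureTheory

/-- The complementary error function `erfc(x) = (2/√π) ∫_x^∞ e^{-u²} du`. -/
noncomputable def erfc (x : ℝ) : ℝ :=
  (2 / Real.sqrt Real.pi) * ∫ u in Set.Ioi x, Real.exp (-u ^ 2)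

namespace DLayerAux

noncomputable def I (x : ℝ) : ℝ := ∫ u in Set.Ioi x, Real.exp (-u ^ 2)

lemma integrable_exp_neg_sq : Integrable (fun u : ℝ => Real.exp (-u ^ 2)) := by
  simpa using integrable_exp_neg_mul_sq (one_pos)

lemma I_eq (x : ℝ) : I x = I 0 - ∫ u in (0:ℝ)..x, Real.exp (-u ^ 2) := by
  have hint := integrable_exp_neg_sq
  have hx : ∀ y : ℝ, I y = (∫ u : ℝ, Real.exp (-u ^ 2)) - ∫ u in Set.Iic y, Real.exp (-u ^ 2) := by
    intro y
    have := integral_add_compl (measurableSet_Iic (a := y)) hint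
    rw [Set.compl_Iic] at this
    rw [I, ← this]; ring
  rw [hx x, hx 0, ← intervalIntegral.integral_Iic_sub_Iic hint.integrableOn hint.integrableOn]
  ring

lemma hasDerivAt_I (x : ℝ) : HasDerivAt I (-Real.exp (-x ^ 2)) x := by
  have hint := integrable_exp_neg_sq
  have h1 : HasDerivAt (fun y => ∫ u in (0:ℝ)..y, Real.exp (-u ^ 2)) (Real.exp (-x ^ 2)) x :=
    intervalIntegral.integral_hasDerivAt_right hint.intervalIntegrable
      hint.aestronglyMeasurable.stronglyMeasurableAtFilter (Real.continuous_exp.comp (by continuity)).continuousAt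
  have h3 : HasDerivAt (fun y => I 0 - ∫ u in (0:ℝ)..y, Real.exp (-u ^ 2))
      (-Real.exp (-x ^ 2)) x := by
    simpa using h1.const_sub (I 0)
  exact h3.congr_of_eventuallyEq (Filter.Eventually.of_forall fun y => I_eq y)

lemma tendsto_I_atTop : Filter.Tendsto I Filter.atTop (nhds 0) := by
  have hint := integrable_exp_neg_sq
  have h := intervalIntegral_tendsto_integral_Ioi (0:ℝ) hint.integrableOn Filter.tendsto_id
  have : Filter.Tendsto (fun x => I 0 - ∫ u in (0:ℝ)..x, Real.exp (-u ^ 2))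
      Filter.atTop (nhds (I 0 - I 0)) := (Filter.Tendsto.const_sub _ h)
  rw [show (0:ℝ) = I 0 - I 0 by ring]
  refine this.congr fun x => ?_
  rw [← I_eq]


lemma inner_eval (η t : ℝ) (ht : 0 < t) :
    (∫ ξ : ℝ, (-η / (2 * t)) * (Real.exp (-(ξ ^ 2 + η ^ 2) / (4 * t)) / (4 * Real.pi * t)))
      = -η * Real.exp (-η ^ 2 / (4 * t)) / (4 * Real.sqrt Real.pi * (t * Real.sqrt t)) := by
  have hπ := Real.pi_pos
  have key : ∀ ξ : ℝ, (-η / (2 * t)) * (Real.exp (-(ξ ^ 2 + η ^ 2) / (4 * t)) / (4 * Real.pi * t))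
      = (-η / (2 * t) * (Real.exp (-η ^ 2 / (4 * t)) / (4 * Real.pi * t)))
        * Real.exp (-(1 / (4 * t)) * ξ ^ 2) := by
    intro ξ
    rw [show -(ξ ^ 2 + η ^ 2) / (4 * t) = (-(1 / (4 * t)) * ξ ^ 2) + (-η ^ 2 / (4 * t)) by
      field_simp; ring, Real.exp_add]
    ring
  simp only [key]
  rw [MeasureTheory.integral_const_mul, integral_gaussian]
  have h1 : Real.pi / (1 / (4 * t)) = (2 * Real.sqrt Real.pi * Real.sqrt t) ^ 2 := by
    rw [mul_pow, mul_pow, Real.sq_sqrt hπ.le, Real.sq_sqrt ht.le]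
    field_simp; ring
  rw [h1, Real.sqrt_sq (by positivity)]
  set E := Real.exp (-η ^ 2 / (4 * t)) with hE
  obtain ⟨p, hp, hp0⟩ : ∃ p, Real.sqrt Real.pi = p ∧ 0 < p :=
    ⟨_, rfl, Real.sqrt_pos.mpr hπ⟩
  obtain ⟨q, hq, hq0⟩ : ∃ q, Real.sqrt t = q ∧ 0 < q := ⟨_, rfl, Real.sqrt_pos.mpr ht⟩
  have h2 : p * p = Real.pi := by rw [← hp]; exact Real.mul_self_sqrt hπ.le
  have h3 : q * q = t := by rw [← hq]; exact Real.mul_self_sqrt ht.le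
  rw [hp, hq, ← h2, ← h3]
  field_simp

lemma deriv_val (η t : ℝ) (hη : η ≠ 0) (ht : 0 < t) :
    HasDerivAt (fun u => (-(Real.sign η / Real.sqrt Real.pi)) * I (|η| / (2 * Real.sqrt u)))
      (-η * Real.exp (-η ^ 2 / (4 * t)) / (4 * Real.sqrt Real.pi * (t * Real.sqrt t))) t := by
  have hπ := Real.pi_pos
  have hq0 : 0 < Real.sqrt t := Real.sqrt_pos.mpr ht
  have hsqrt := Real.hasDerivAt_sqrt ht.ne'
  have h2 : HasDerivAt (fun u => 2 * Real.sqrt u) (2 * (1 / (2 * Real.sqrt t))) t :=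
    hsqrt.const_mul 2
  have hne : 2 * Real.sqrt t ≠ 0 := by positivity
  have h3 := h2.inv hne
  have h4 : HasDerivAt (fun u => |η| / (2 * Real.sqrt u))
      (|η| * (-(2 * (1 / (2 * Real.sqrt t))) / (2 * Real.sqrt t) ^ 2)) t := by
    simpa [div_eq_mul_inv] using h3.const_mul |η|
  have h5 := (hasDerivAt_I (|η| / (2 * Real.sqrt t))).comp t h4
  have h6 := h5.const_mul (-(Real.sign η / Real.sqrt Real.pi))
  have harg : (|η| / (2 * Real.sqrt t)) ^ 2 = η ^ 2 / (4 * t) := by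
    rw [div_pow, mul_pow, sq_abs, Real.sq_sqrt ht.le]; norm_num
  refine h6.congr_deriv (Eq.symm ?_)
  rw [harg, show -(η ^ 2 / (4 * t)) = -η ^ 2 / (4 * t) by ring]
  obtain ⟨p, hp, hp0⟩ : ∃ p, Real.sqrt Real.pi = p ∧ 0 < p :=
    ⟨_, rfl, Real.sqrt_pos.mpr hπ⟩
  obtain ⟨q, hq, hq0⟩ : ∃ q, Real.sqrt t = q ∧ 0 < q := ⟨_, rfl, hq0⟩
  have h3' : q * q = t := by rw [← hq]; exact Real.mul_self_sqrt ht.le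
  have hsgn : Real.sign η * |η| = η := by
    rcases hη.lt_or_gt with h | h
    · rw [Real.sign_of_neg h, abs_of_neg h]; ring
    · rw [Real.sign_of_pos h, abs_of_pos h]; ring
  rw [hp, hq]
  generalize Real.exp (-η ^ 2 / (4 * t)) = E
  rw [← h3']
  field_simp
  linear_combination (E * 4) * hsgn

end DLayerAux

/-- Exact identity for the local double layer heat potential across the flat
boundary `{x₂ = 0}` with unit density and outward normal `(0,-1)`. -/
theorem local_double_layer_flat_boundary_identity
    (δ η : ℝ) (hδ : 0 < δ) (hη : η ≠ 0) :
    (∫ t in (0:ℝ)..δ, ∫ ξ : ℝ,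
        (-η / (2 * t)) * (Real.exp (-(ξ ^ 2 + η ^ 2) / (4 * t)) / (4 * Real.pi * t)))
      = -(1/2) * Real.sign η * erfc (|η| / (2 * Real.sqrt δ)) := by
  have hπ := Real.pi_pos
  have hηa : (0:ℝ) < |η| := abs_pos.mpr hη
  set g : ℝ → ℝ := fun t =>
    -η * Real.exp (-η ^ 2 / (4 * t)) / (4 * Real.sqrt Real.pi * (t * Real.sqrt t)) with hgdef
  set F : ℝ → ℝ := fun t => if t ≤ 0 then 0
    else -(Real.sign η / Real.sqrt Real.pi) * DLayerAux.I (|η| / (2 * Real.sqrt t)) with hFdef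
  have hFderiv : ∀ t : ℝ, 0 < t → HasDerivAt F (g t) t := by
    intro t ht
    refine (DLayerAux.deriv_val η t hη ht).congr_of_eventuallyEq ?_
    filter_upwards [IsOpen.mem_nhds isOpen_Ioi ht] with u hu
    simp only [hFdef, if_neg (not_le.mpr (Set.mem_Ioi.mp hu))]
  have hFcont : ContinuousOn F (Set.Icc 0 δ) := by
    intro x hx
    rcases hx.1.eq_or_lt with h0 | hpos
    · rw [← h0]
      have hF0 : F 0 = 0 := by simp [hFdef]
      have hT : Filter.Tendsto F (nhdsWithin 0 (Set.Iic 0) ⊔ nhdsWithin 0 (Set.Ioi 0))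
          (nhds 0) := by
        rw [Filter.tendsto_sup]
        constructor
        · refine Filter.Tendsto.congr' ?_ tendsto_const_nhds
          filter_upwards [eventually_mem_nhdsWithin] with y hy
          simp [hFdef, if_pos (Set.mem_Iic.mp hy)]
        · have h1 : Filter.Tendsto (fun y : ℝ => 2 * Real.sqrt y) (nhdsWithin 0 (Set.Ioi 0))
              (nhdsWithin 0 (Set.Ioi 0)) := by
            rw [tendsto_nhdsWithin_iff]
            constructor
            · have := ((Real.continuous_sqrt.tendsto 0).const_mul 2).mono_left
                (nhdsWithin_le_nhds (s := Set.Ioi (0:ℝ)))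
              simpa using this
            · filter_upwards [eventually_mem_nhdsWithin] with y hy
              have : 0 < Real.sqrt y := Real.sqrt_pos.mpr (Set.mem_Ioi.mp hy)
              exact Set.mem_Ioi.mpr (by linarith)
          have h2 := tendsto_inv_nhdsGT_zero.comp h1
          have h3 : Filter.Tendsto (fun y : ℝ => |η| / (2 * Real.sqrt y))
              (nhdsWithin 0 (Set.Ioi 0)) Filter.atTop := by
            simp only [div_eq_mul_inv]
            exact h2.const_mul_atTop hηa
          have h4 := DLayerAux.tendsto_I_atTop.comp h3
          have h5 := h4.const_mul (-(Real.sign η / Real.sqrt Real.pi))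
          rw [mul_zero] at h5
          refine Filter.Tendsto.congr' ?_ h5
          filter_upwards [eventually_mem_nhdsWithin] with y hy
          simp only [hFdef, if_neg (not_le.mpr (Set.mem_Ioi.mp hy)), Function.comp]
      rw [ContinuousWithinAt, hF0]
      refine hT.mono_left ?_
      rw [← nhdsWithin_union]
      exact nhdsWithin_mono _ (fun y _ => (le_or_gt y 0).imp Set.mem_Iic.mpr Set.mem_Ioi.mpr)
    · exact ((hFderiv x hpos).continuousAt).continuousWithinAt
  have hgint : IntervalIntegrable g volume 0 δ := by
    rw [intervalIntegrable_iff_integrableOn_Ioc_of_le hδ.le]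
    rcases hη.lt_or_gt with hneg | hpos
    · refine intervalIntegral.integrableOn_deriv_of_nonneg hFcont (fun t ht => hFderiv t ht.1) ?_
      intro t ht
      have ht1 : 0 < t := ht.1
      have h1 : 0 < 4 * Real.sqrt Real.pi * (t * Real.sqrt t) := by positivity
      exact div_nonneg (mul_nonneg (by linarith) (Real.exp_pos _).le) h1.le
    · have h : IntegrableOn (fun t => -g t) (Set.Ioc 0 δ) := by
        refine intervalIntegral.integrableOn_deriv_of_nonneg hFcont.neg (fun t ht => (hFderiv t ht.1).neg) ?_
        intro t ht
        have ht1 : 0 < t := ht.1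
        have h1 : 0 < 4 * Real.sqrt Real.pi * (t * Real.sqrt t) := by positivity
        simp only [hgdef, neg_div, neg_neg, neg_mul]
        exact div_nonneg (mul_nonneg hpos.le (Real.exp_pos _).le) h1.le
      exact h.neg.congr (Filter.Eventually.of_forall fun t => by simp)
  have hcongr : (∫ t in (0:ℝ)..δ, ∫ ξ : ℝ,
        (-η / (2 * t)) * (Real.exp (-(ξ ^ 2 + η ^ 2) / (4 * t)) / (4 * Real.pi * t)))
      = ∫ t in (0:ℝ)..δ, g t := by
    refine intervalIntegral.integral_congr_ae ?_
    filter_upwards with t ht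
    rw [Set.uIoc_of_le hδ.le] at ht
    exact DLayerAux.inner_eval η t ht.1
  rw [hcongr, intervalIntegral.integral_eq_sub_of_hasDeriv_right_of_le hδ.le hFcont
    (fun t ht => (hFderiv t ht.1).hasDerivWithinAt) hgint]
  simp only [hFdef, if_neg (not_le.mpr hδ), if_pos le_rfl, erfc, DLayerAux.I]
  ring
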